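/- arXiv:1506.06388 — 3 statements merged into one kernel-verified Lean document; each statement's English description precedes it below -/
import Mathlib

section
/- Let s* : ℝ × ℝ × M → ℝ satisfy the cocycle equation s*(t, r+s, x) = s*(t, r, x) + s*(t, s, φ_r(x)) for all r, s, t ∈ ℝ and x ∈ M, together with (∂_1 s*)(t, 0, x) = 0, and suppose u_{t,s}(x) := (∂_1 ∂_2 s*)(t, s, x) exists and is continuous in (t, s, x). Then for all t, s ∈ ℝ and x ∈ M, (∂_1 s*)(t, s, x) = ∫_0^s u_{t,0}(φ_r(x)) dr. -/
/-!
Differentiating the cocycle equation in `t` shows that `∂₁ s*(t, ·, ·)` is again a cocycle over the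
flow. The time derivative of a cocycle is determined by its value at time `0`:
differentiating `c (r + s) x = c r x + c s (φ r x)` at `s = 0` gives `v r x = v 0 (φ r x)` for the derivative `v` of `c`.
The fundamental theorem of calculus then recovers `∂₁ s*` from `u_{t,0}` along the orbit.
-/

open intervalIntegral

section

variable {M E : Type*} [NormedAddCommGroup E] [NormedSpace ℝ E]

def IsAddCocycle (φ : ℝ → M → M) (c : ℝ → M → E) : Prop :=
  ∀ r s x, c (r + s) x = c r x + c s (φ r x)

namespace IsAddCocycle

variable {φ : ℝ → M → M}

theorem of_hasDerivAt_param {c : ℝ → ℝ → M → E} {c' : ℝ → ℝ → M → E}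
    (hc : ∀ t, IsAddCocycle φ (c t)) (hc' : ∀ t s x, HasDerivAt (fun t' => c t' s x) (c' t s x) t)
    (t : ℝ) : IsAddCocycle φ (c' t) := by
  intro r s x
  refine (hc' t (r + s) x).unique ?_
  refine ((hc' t r x).add (hc' t s (φ r x))).congr_of_eventuallyEq ?_
  filter_upwards with t' using hc t' r s x

theorem eq_apply_zero_of_hasDerivAt {c v : ℝ → M → E} (hc : IsAddCocycle φ c)
    (hv : ∀ s x, HasDerivAt (fun s' => c s' x) (v s x) s) (r : ℝ) (x : M) :
    v r x = v 0 (φ r x) := by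
  have hshift : HasDerivAt (fun s => c (r + s) x) (v r x) 0 := by
    simpa using (hv (r + 0) x).comp_const_add r 0
  refine hshift.unique ?_
  refine ((hv 0 (φ r x)).const_add (c r x)).congr_of_eventuallyEq ?_
  filter_upwards with s using hc r s x

theorem eq_add_integral [CompleteSpace E] {c v : ℝ → M → E} (hc : IsAddCocycle φ c)
    (hv : ∀ s x, HasDerivAt (fun s' => c s' x) (v s x) s)
    (hvcont : ∀ x, Continuous fun s => v s x) (s : ℝ) (x : M) :
    c s x = c 0 x + ∫ r in (0 : ℝ)..s, v 0 (φ r x) := by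
  have hftc : ∫ r in (0 : ℝ)..s, v r x = c s x - c 0 x :=
    integral_eq_sub_of_hasDerivAt (fun r _ => hv r x) ((hvcont x).intervalIntegrable 0 s)
  rw [← integral_congr fun r _ => hc.eq_apply_zero_of_hasDerivAt hv r x, hftc, add_sub_cancel]

end IsAddCocycle

end

theorem partial_one_sstar_eq_integral_general
    {M : Type*} [TopologicalSpace M]
    (φ : ℝ → M → M)
    (sstar : ℝ → ℝ → M → ℝ)
    (d₁ : ℝ → ℝ → M → ℝ) (u : ℝ → ℝ → M → ℝ)
    (hd₁ : ∀ t s x, HasDerivAt (fun t' => sstar t' s x) (d₁ t s x) t)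
    (hu : ∀ t s x, HasDerivAt (fun s' => d₁ t s' x) (u t s x) s)
    (hucont : Continuous fun p : ℝ × ℝ × M => u p.1 p.2.1 p.2.2)
    (hcocycle : ∀ t r s x, sstar t (r + s) x = sstar t r x + sstar t s (φ r x))
    (hzero : ∀ t x, d₁ t 0 x = 0) :
    ∀ t s x, d₁ t s x = ∫ r in (0:ℝ)..s, u t 0 (φ r x) := by
  intro t s x
  have hd₁_cocycle : IsAddCocycle φ (d₁ t) := IsAddCocycle.of_hasDerivAt_param hcocycle hd₁ t
  have hu_slice : ∀ x, Continuous fun s => u t s x := fun x =>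
    hucont.comp (continuous_const.prodMk (continuous_id.prodMk continuous_const))
  rw [hd₁_cocycle.eq_add_integral (hu t) hu_slice s x, hzero, zero_add]

/-- If `s* : ℝ × ℝ × M → ℝ` satisfies the cocycle equation
`s*(t, r+s, x) = s*(t, r, x) + s*(t, s, φ_r(x))`, together with `(∂₁ s*)(t,0,x) = 0`,
and the mixed derivative `u_{t,s}(x) := (∂₁∂₂ s*)(t,s,x)` exists and is jointly
continuous, then `(∂₁ s*)(t,s,x) = ∫_0^s u_{t,0}(φ_r(x)) dr`. -/
theorem partial_one_sstar_eq_integral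
    {M : Type*} [TopologicalSpace M]
    (φ : ℝ → M → M)
    (hφcont : Continuous fun p : ℝ × M => φ p.1 p.2)
    (hφ0 : ∀ x, φ 0 x = x)
    (hφadd : ∀ s t x, φ s (φ t x) = φ (s + t) x)
    (sstar : ℝ → ℝ → M → ℝ)
    (d₁ : ℝ → ℝ → M → ℝ) (u : ℝ → ℝ → M → ℝ)
    (hd₁ : ∀ t s x, HasDerivAt (fun t' => sstar t' s x) (d₁ t s x) t)
    (hu : ∀ t s x, HasDerivAt (fun s' => d₁ t s' x) (u t s x) s)
    (hucont : Continuous fun p : ℝ × ℝ × M => u p.1 p.2.1 p.2.2)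
    (hcocycle : ∀ t r s x, sstar t (r + s) x = sstar t r x + sstar t s (φ r x))
    (hzero : ∀ t x, d₁ t 0 x = 0) :
    ∀ t s x, d₁ t s x = ∫ r in (0:ℝ)..s, u t 0 (φ r x) :=
  partial_one_sstar_eq_integral_general φ sstar d₁ u hd₁ hu hucont hcocycle hzero
end

section
/- Let H be a self-adjoint operator in a Hilbert space ℋ generating the unitary group U_s = e^{-isH}, and let X be a (possibly unbounded) operator with dense domain D invariant under U_s, such that iX restricted to a dense core of H is symmetric after multiplication by a bounded positive continuous weight ρ^{-1}. Suppose there is a constant c > 0 and for each φ in a core C ⊂ dom(H) and ψ ∈ C one has ⟨ρ^{-1}ψ, s^{-1}(∂_1 s*)(0,s,·) U_s Hφ⟩ = s^{-1}⟨ρ^{-1}ψ, i U_s Xφ⟩ − s^{-1}⟨i ρ^{-1}X ψ, U_s φ⟩ with s^{-1}(∂_1 s*)(0,s,·) → ln λ > 0 uniformly as s → ∞. Then lim_{s→∞} ⟨ψ, U_s φ⟩ = 0 for all ψ ∈ ℋ and φ ∈ ker(H)^⊥. -/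
open Filter
open scoped InnerProductSpace

private lemma aux_tendsto_closure {ℋ : Type*} [NormedAddCommGroup ℋ]
    (T : ℝ → ℋ → ℂ) (K : ℝ)
    (hLip : ∀ s x y, ‖T s x - T s y‖ ≤ K * ‖x - y‖) {S : Set ℋ}
    (h : ∀ x ∈ S, Tendsto (fun s => T s x) atTop (nhds 0)) {x : ℋ}
    (hx : x ∈ closure S) :
    Tendsto (fun s => T s x) atTop (nhds 0) := by
  rw [Metric.tendsto_nhds]
  intro ε hε
  set K' : ℝ := max K 0 + 1 with hK'
  have hK'pos : 0 < K' := by positivity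
  have hKK' : K ≤ K' := le_trans (le_max_left _ _) (by linarith)
  obtain ⟨y, hyS, hxy⟩ := Metric.mem_closure_iff.mp hx (ε / (2 * K'))
    (by positivity)
  have hy := h y hyS
  rw [Metric.tendsto_nhds] at hy
  filter_upwards [hy (ε / 2) (by positivity)] with s hs
  have h1 : ‖T s x - T s y‖ ≤ K' * ‖x - y‖ :=
    le_trans (hLip s x y) (by
      have : (0:ℝ) ≤ ‖x - y‖ := norm_nonneg _
      nlinarith)
  have h2 : ‖x - y‖ < ε / (2 * K') := by
    rw [← dist_eq_norm]; exact hxy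
  have h3 : K' * ‖x - y‖ < ε / 2 := by
    have := mul_lt_mul_of_pos_left h2 hK'pos
    calc K' * ‖x - y‖ < K' * (ε / (2 * K')) := this
      _ = ε / 2 := by field_simp
  have h4 : ‖T s y‖ < ε / 2 := by rwa [dist_zero_right] at hs
  rw [dist_zero_right]
  calc ‖T s x‖ ≤ ‖T s x - T s y‖ + ‖T s y‖ := by
        simpa using norm_add_le (T s x - T s y) (T s y)
    _ < ε / 2 + ε / 2 := by
        exact add_lt_add (lt_of_le_of_lt h1 h3) h4
    _ = ε := by ring

/-- Abstract strong mixing argument. Let `H` be a self-adjoint operator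
generating the unitary group `U_s = e^{-isH}`, `C ⊆ dom H` a dense core, `X` an auxiliary
(possibly unbounded) operator, `W` a bounded invertible self-adjoint positive weight
(`ρ⁻¹`), and `B s` bounded operators (multiplication by `s⁻¹(∂₁s*)(0,s,·)`) with
`‖B s − ln λ‖ → 0`, `ln λ > 0`. If for all `s > 0` and `ψ, φ ∈ C`
`⟪Wψ, B s (U s (Hφ))⟫ = s⁻¹ ⟪Wψ, i U_s Xφ⟫ − s⁻¹ ⟪i W Xψ, U_s φ⟫`,
then `⟪ψ, U_s φ⟫ → 0` as `s → ∞` for every `ψ ∈ ℋ` and every `φ ∈ ker(H)ᗮ`. -/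
theorem correlation_decay_of_uniform_expansion_identity
    {ℋ : Type*} [NormedAddCommGroup ℋ] [InnerProductSpace ℂ ℋ] [CompleteSpace ℋ]
    (H : ℋ →ₗ.[ℂ] ℋ) (hH : IsSelfAdjoint H)
    (U : ℝ → (ℋ ≃ₗᵢ[ℂ] ℋ))
    (hU0 : ∀ x : ℋ, U 0 x = x)
    (hUadd : ∀ s t (x : ℋ), U s (U t x) = U (s + t) x)
    (hUcont : ∀ x : ℋ, Continuous fun s : ℝ => U s x)
    (hgen : ∀ (x : H.domain) (t : ℝ),
      HasDerivAt (fun s : ℝ => U s (x : ℋ)) ((-Complex.I) • U t (H x)) t)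
    -- `C` is a dense core of `H`
    (C : Set ℋ) (hCdom : C ⊆ (H.domain : Set ℋ)) (hCdense : Dense C)
    (hcore : ∀ x : H.domain, ((x : ℋ), H x) ∈
      closure {p : ℋ × ℋ | ∃ c ∈ C, p.1 = c ∧ ∃ hc : c ∈ H.domain, p.2 = H ⟨c, hc⟩})
    -- the auxiliary operator `X` and the bounded invertible positive weight `W = ρ⁻¹`
    (X : ℋ → ℋ) (W : ℋ ≃L[ℂ] ℋ)
    (hWsa : IsSelfAdjoint (W : ℋ →L[ℂ] ℋ))
    (hWpos : ∀ x : ℋ, 0 ≤ (⟪(W : ℋ →L[ℂ] ℋ) x, x⟫_ℂ).re)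
    -- the operators `B s` (multiplication by `s⁻¹ (∂₁s*)(0,s,·)`) converging to `ln λ > 0`
    (lam : ℝ) (hlam : 0 < Real.log lam)
    (B : ℝ → ℋ →L[ℂ] ℋ)
    (hBconv : Tendsto (fun s : ℝ =>
      ‖B s - (Real.log lam : ℂ) • (1 : ℋ →L[ℂ] ℋ)‖) atTop (nhds 0))
    -- the uniform expansion identity
    (hident : ∀ s > (0:ℝ), ∀ ψ ∈ C, ∀ φ (hφ : φ ∈ C),
      ⟪W ψ, B s (U s (H ⟨φ, hCdom hφ⟩))⟫_ℂ
        = (s : ℂ)⁻¹ * ⟪W ψ, Complex.I • U s (X φ)⟫_ℂ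
          - (s : ℂ)⁻¹ * ⟪Complex.I • W (X ψ), U s φ⟫_ℂ) :
    ∀ ψ φ : ℋ,
      (∀ y (hy : y ∈ H.domain), H ⟨y, hy⟩ = 0 → ⟪y, φ⟫_ℂ = 0) →
      Tendsto (fun s : ℝ => ⟪ψ, U s φ⟫_ℂ) atTop (nhds 0) := by
  intro ψ φ hφ
  set l : ℝ := Real.log lam with hl
  have hdense : Dense (H.domain : Set ℋ) := hCdense.mono hCdom
  -- Step A: for ψ' ∈ C and c ∈ C, ⟪W ψ', U s (H c)⟫ → 0
  have stepA : ∀ ψ' ∈ C, ∀ c, ∀ hc : c ∈ C,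
      Tendsto (fun s : ℝ => ⟪W ψ', U s (H ⟨c, hCdom hc⟩)⟫_ℂ) atTop (nhds 0) := by
    intro ψ' hψ' c hc
    set φ₀ : ℋ := H ⟨c, hCdom hc⟩ with hφ₀
    set M : ℝ := ‖W ψ'‖ * ‖X c‖ + ‖W (X ψ')‖ * ‖c‖ with hM
    have hbound : ∀ s : ℝ, 0 < s →
        ‖⟪W ψ', U s φ₀⟫_ℂ‖ ≤
          l⁻¹ * (s⁻¹ * M
            + ‖W ψ'‖ * ‖B s - (l : ℂ) • (1 : ℋ →L[ℂ] ℋ)‖ * ‖φ₀‖) := by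
      intro s hs
      have hid := hident s hs ψ' hψ' c hc
      have hdecomp : ⟪W ψ', B s (U s φ₀)⟫_ℂ
          = ⟪W ψ', (B s - (l : ℂ) • (1 : ℋ →L[ℂ] ℋ)) (U s φ₀)⟫_ℂ
            + (l : ℂ) * ⟪W ψ', U s φ₀⟫_ℂ := by
        rw [← inner_smul_right, ← inner_add_right]
        congr 1
        simp [ContinuousLinearMap.sub_apply, ContinuousLinearMap.smul_apply]
      have key : (l : ℂ) * ⟪W ψ', U s φ₀⟫_ℂ
          = ((s : ℂ)⁻¹ * ⟪W ψ', Complex.I • U s (X c)⟫_ℂ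
              - (s : ℂ)⁻¹ * ⟪Complex.I • W (X ψ'), U s c⟫_ℂ)
            - ⟪W ψ', (B s - (l : ℂ) • (1 : ℋ →L[ℂ] ℋ)) (U s φ₀)⟫_ℂ := by
        rw [← hid, hdecomp]; ring
      have hnorm1 : ‖(s : ℂ)⁻¹ * ⟪W ψ', Complex.I • U s (X c)⟫_ℂ
              - (s : ℂ)⁻¹ * ⟪Complex.I • W (X ψ'), U s c⟫_ℂ‖ ≤ s⁻¹ * M := by
        have e1 : ‖⟪W ψ', Complex.I • U s (X c)⟫_ℂ‖ ≤ ‖W ψ'‖ * ‖X c‖ := by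
          calc ‖⟪W ψ', Complex.I • U s (X c)⟫_ℂ‖
              ≤ ‖W ψ'‖ * ‖Complex.I • U s (X c)‖ := norm_inner_le_norm _ _
            _ = ‖W ψ'‖ * ‖X c‖ := by
                rw [norm_smul, Complex.norm_I, one_mul,
                  LinearIsometryEquiv.norm_map]
        have e2 : ‖⟪Complex.I • W (X ψ'), U s c⟫_ℂ‖ ≤ ‖W (X ψ')‖ * ‖c‖ := by
          calc ‖⟪Complex.I • W (X ψ'), U s c⟫_ℂ‖
              ≤ ‖Complex.I • W (X ψ')‖ * ‖U s c‖ := norm_inner_le_norm _ _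
            _ = ‖W (X ψ')‖ * ‖c‖ := by
                rw [norm_smul, Complex.norm_I, one_mul,
                  LinearIsometryEquiv.norm_map]
        have hsinv : ‖(s : ℂ)⁻¹‖ = s⁻¹ := by
          rw [norm_inv, Complex.norm_real, Real.norm_of_nonneg hs.le]
        calc ‖(s : ℂ)⁻¹ * ⟪W ψ', Complex.I • U s (X c)⟫_ℂ
              - (s : ℂ)⁻¹ * ⟪Complex.I • W (X ψ'), U s c⟫_ℂ‖
            ≤ ‖(s : ℂ)⁻¹ * ⟪W ψ', Complex.I • U s (X c)⟫_ℂ‖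
              + ‖(s : ℂ)⁻¹ * ⟪Complex.I • W (X ψ'), U s c⟫_ℂ‖ := norm_sub_le _ _
          _ = s⁻¹ * ‖⟪W ψ', Complex.I • U s (X c)⟫_ℂ‖
              + s⁻¹ * ‖⟪Complex.I • W (X ψ'), U s c⟫_ℂ‖ := by
                rw [norm_mul, norm_mul, hsinv]
          _ ≤ s⁻¹ * (‖W ψ'‖ * ‖X c‖) + s⁻¹ * (‖W (X ψ')‖ * ‖c‖) := by
                have h0 : (0:ℝ) ≤ s⁻¹ := by positivity
                exact add_le_add (mul_le_mul_of_nonneg_left e1 h0)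
                  (mul_le_mul_of_nonneg_left e2 h0)
          _ = s⁻¹ * M := by rw [hM]; ring
      have hnorm2 : ‖⟪W ψ', (B s - (l : ℂ) • (1 : ℋ →L[ℂ] ℋ)) (U s φ₀)⟫_ℂ‖
          ≤ ‖W ψ'‖ * ‖B s - (l : ℂ) • (1 : ℋ →L[ℂ] ℋ)‖ * ‖φ₀‖ := by
        calc ‖⟪W ψ', (B s - (l : ℂ) • (1 : ℋ →L[ℂ] ℋ)) (U s φ₀)⟫_ℂ‖
            ≤ ‖W ψ'‖ * ‖(B s - (l : ℂ) • (1 : ℋ →L[ℂ] ℋ)) (U s φ₀)‖ :=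
              norm_inner_le_norm _ _
          _ ≤ ‖W ψ'‖ * (‖B s - (l : ℂ) • (1 : ℋ →L[ℂ] ℋ)‖ * ‖U s φ₀‖) :=
              mul_le_mul_of_nonneg_left
                ((B s - (l : ℂ) • (1 : ℋ →L[ℂ] ℋ)).le_opNorm _) (norm_nonneg _)
          _ = ‖W ψ'‖ * ‖B s - (l : ℂ) • (1 : ℋ →L[ℂ] ℋ)‖ * ‖φ₀‖ := by
              rw [LinearIsometryEquiv.norm_map]; ring
      have hmain : l * ‖⟪W ψ', U s φ₀⟫_ℂ‖
          ≤ s⁻¹ * M + ‖W ψ'‖ * ‖B s - (l : ℂ) • (1 : ℋ →L[ℂ] ℋ)‖ * ‖φ₀‖ := by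
        have : ‖(l : ℂ) * ⟪W ψ', U s φ₀⟫_ℂ‖ = l * ‖⟪W ψ', U s φ₀⟫_ℂ‖ := by
          rw [norm_mul, Complex.norm_real, Real.norm_of_nonneg hlam.le]
        rw [← this, key]
        exact le_trans (norm_sub_le _ _) (add_le_add hnorm1 hnorm2)
      rw [le_inv_mul_iff₀ hlam]
      exact hmain
    have hgtend : Tendsto (fun s : ℝ => l⁻¹ * (s⁻¹ * M
        + ‖W ψ'‖ * ‖B s - (l : ℂ) • (1 : ℋ →L[ℂ] ℋ)‖ * ‖φ₀‖)) atTop (nhds 0) := by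
      have h1 : Tendsto (fun s : ℝ => s⁻¹ * M) atTop (nhds 0) := by
        simpa using tendsto_inv_atTop_zero.mul_const M
      have h2 : Tendsto (fun s : ℝ =>
          ‖W ψ'‖ * ‖B s - (l : ℂ) • (1 : ℋ →L[ℂ] ℋ)‖ * ‖φ₀‖) atTop (nhds 0) := by
        have := (hBconv.const_mul ‖W ψ'‖).mul_const ‖φ₀‖
        simpa [mul_assoc] using this
      simpa using (h1.add h2).const_mul l⁻¹
    rw [tendsto_zero_iff_norm_tendsto_zero]
    apply squeeze_zero' (Eventually.of_forall fun s => norm_nonneg _)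
      _ hgtend
    filter_upwards [eventually_gt_atTop (0:ℝ)] with s hs
    exact hbound s hs
  -- Step B: for every ψ₀ : ℋ and c ∈ C, ⟪ψ₀, U s (H c)⟫ → 0
  have hWC : Dense ((W : ℋ → ℋ) '' C) := by
    rw [dense_iff_closure_eq, show ⇑W = ⇑W.toHomeomorph from rfl,
      ← W.toHomeomorph.image_closure C,
      hCdense.closure_eq, Set.image_univ]
    exact W.surjective.range_eq
  have stepB : ∀ (ψ₀ : ℋ), ∀ c, ∀ hc : c ∈ C,
      Tendsto (fun s : ℝ => ⟪ψ₀, U s (H ⟨c, hCdom hc⟩)⟫_ℂ) atTop (nhds 0) := by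
    intro ψ₀ c hc
    set φ₀ : ℋ := H ⟨c, hCdom hc⟩ with hφ₀
    apply aux_tendsto_closure (S := (W : ℋ → ℋ) '' C) (fun s x => ⟪x, U s φ₀⟫_ℂ) ‖φ₀‖
    · intro s x y
      rw [← inner_sub_left]
      calc ‖⟪x - y, U s φ₀⟫_ℂ‖ ≤ ‖x - y‖ * ‖U s φ₀‖ := norm_inner_le_norm _ _
        _ = ‖φ₀‖ * ‖x - y‖ := by rw [LinearIsometryEquiv.norm_map]; ring
    · rintro x ⟨ψ', hψ', rfl⟩
      exact stepA ψ' hψ' c hc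
    · rw [hWC.closure_eq]; trivial
  -- Step C: φ is in the closure of the image of `C` under `H`
  set S₀ : Set ℋ := {y | ∃ c ∈ C, ∃ hc : c ∈ H.domain, y = H ⟨c, hc⟩} with hS₀
  have hrange : ∀ x : H.domain, H x ∈ closure S₀ := by
    intro x
    have h1 := hcore x
    have h2 : Prod.snd '' closure {p : ℋ × ℋ | ∃ c ∈ C, p.1 = c ∧
        ∃ hc : c ∈ H.domain, p.2 = H ⟨c, hc⟩} ⊆ closure S₀ := by
      refine subset_trans (image_closure_subset_closure_image continuous_snd) ?_
      apply closure_mono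
      rintro y ⟨⟨p1, p2⟩, ⟨c, hc, hp1, hcd, hp2⟩, rfl⟩
      exact ⟨c, hc, hcd, hp2⟩
    exact h2 ⟨_, h1, rfl⟩
  have hker : ∀ z : ℋ, (∀ x : H.domain, ⟪z, H x⟫_ℂ = 0) → ⟪z, φ⟫_ℂ = 0 := by
    intro z hz
    have hmem : z ∈ (LinearPMap.adjoint H).domain :=
      LinearPMap.mem_adjoint_domain_of_exists z ⟨0, fun x => by
        rw [inner_zero_left, hz x]⟩
    have happ : (LinearPMap.adjoint H) ⟨z, hmem⟩ = 0 :=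
      LinearPMap.adjoint_apply_eq hdense _ (fun x => by
        rw [inner_zero_left, hz x])
    have heq : LinearPMap.adjoint H = H := hH
    have hle : LinearPMap.adjoint H ≤ H := le_of_eq heq
    have hzd : z ∈ H.domain := hle.1 hmem
    have : H ⟨z, hzd⟩ = 0 := by
      rw [← hle.2 (x := ⟨z, hmem⟩) (y := ⟨z, hzd⟩) rfl]
      exact happ
    exact hφ z hzd this
  have hφcl : φ ∈ closure S₀ := by
    set R : Submodule ℂ ℋ := LinearMap.range H.toFun with hR
    have hφR : φ ∈ Rᗮᗮ := by
      intro z hzR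
      apply hker
      intro x
      have : ⟪H x, z⟫_ℂ = 0 := hzR (H x) ⟨x, rfl⟩
      rw [← inner_conj_symm, this, map_zero]
    rw [Submodule.orthogonal_orthogonal_eq_closure] at hφR
    have h1 : (R : Set ℋ) ⊆ closure S₀ := by
      rintro y ⟨x, rfl⟩
      exact hrange x
    have h2 : (R.topologicalClosure : Set ℋ) ⊆ closure S₀ := by
      rw [Submodule.topologicalClosure_coe]
      exact closure_minimal h1 isClosed_closure
    exact h2 hφR
  -- Step D: conclude
  apply aux_tendsto_closure (fun s x => ⟪ψ, U s x⟫_ℂ) ‖ψ‖ _ _ hφcl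
  · intro s x y
    rw [← inner_sub_right, ← map_sub]
    calc ‖⟪ψ, U s (x - y)⟫_ℂ‖ ≤ ‖ψ‖ * ‖U s (x - y)‖ := norm_inner_le_norm _ _
      _ = ‖ψ‖ * ‖x - y‖ := by rw [LinearIsometryEquiv.norm_map]
  · rintro x ⟨c, hc, hcd, rfl⟩
    exact stepB ψ c hc
end

section
/- Let H be a self-adjoint operator with spectral measure E^H. Suppose H is of class C¹(A_t) for each t > 0 with [iH, −ln(λ)A_t] = 2 ln(λ) c_t H − ln(λ)(H−i)[(H−i)^{-1}, c_t](H−i) as forms on E^H(I)ℋ for compact I ⊂ (0,∞), where c_t are bounded self-adjoint multiplication operators converging in operator norm to the constant ln(λ) > 0 as t → ∞. Then for every compact I ⊂ (0,∞) with I ∩ σ(H) ≠ ∅ there exist t > 0 and a > 0 such that E^H(I)[iH, −ln(λ)A_t]E^H(I) ≥ a E^H(I). -/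
open Filter
open scoped InnerProductSpace

/-- (Strict Mourre estimate.) Let `H` be self-adjoint with spectral
measure `E^H`, `I ⊆ (0,∞)` compact with `I ∩ σ(H) ≠ ∅` (so `P := E^H(I) ≠ 0`). Suppose
`H` is of class `C¹(A_t)` for each `t > 0`, with commutator form (on `E^H(I)ℋ`)
`[iH, −ln(λ)A_t] = 2 ln(λ) c_t H − ln(λ)(H−i)[(H−i)⁻¹, c_t](H−i)`,
where the `c_t` are bounded self-adjoint (multiplication) operators converging in operator
norm to the constant `ln(λ) > 0` as `t → ∞`. Then there exist `t > 0` and `a > 0` with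
`E^H(I)[iH, −ln(λ)A_t]E^H(I) ≥ a E^H(I)`.

Here `P` plays the role of `E^H(I)`, `HP` that of the (bounded) operator `H E^H(I)`,
`R` that of the resolvent `(H−i)⁻¹`, and `Φ t φ` that of the commutator form
`⟨φ, [iH, −ln(λ)A_t] φ⟩`. -/
theorem strict_mourre_estimate
    {ℋ : Type*} [NormedAddCommGroup ℋ] [InnerProductSpace ℂ ℋ] [CompleteSpace ℋ]
    (I : Set ℝ) (hIcomp : IsCompact I) (hIpos : I ⊆ Set.Ioi (0:ℝ)) (hIne : I.Nonempty)
    -- `P = E^H(I)` is a nonzero orthogonal projection (`I ∩ σ(H) ≠ ∅`)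
    (P : ℋ →L[ℂ] ℋ) (hPproj : IsIdempotentElem P) (hPsa : IsSelfAdjoint P) (hPne : P ≠ 0)
    -- `HP = H E^H(I)` is bounded, self-adjoint, supported in `ran P`, with `H ≥ inf I`
    -- on `ran P`
    (HP : ℋ →L[ℂ] ℋ) (hHPsa : IsSelfAdjoint HP)
    (hHPP : HP.comp P = HP) (hPHP : P.comp HP = HP)
    (hHlow : ∀ φ : ℋ, sInf I * ‖P φ‖ ^ 2 ≤ (⟪P φ, HP (P φ)⟫_ℂ).re)
    -- `R = (H−i)⁻¹`
    (R : ℋ →L[ℂ] ℋ) (hRnorm : ‖R‖ ≤ 1)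
    (hRHP : ∀ φ : ℋ, R ((HP - Complex.I • P) φ) = P φ)
    -- the multiplication operators `c_t`, converging in norm to `ln λ > 0`
    (lam : ℝ) (hlam : 0 < Real.log lam)
    (c : ℝ → ℋ →L[ℂ] ℋ) (hcsa : ∀ t, IsSelfAdjoint (c t))
    (hcconv : Tendsto (fun t : ℝ =>
      ‖c t - (Real.log lam : ℂ) • (1 : ℋ →L[ℂ] ℋ)‖) atTop (nhds 0))
    -- `Φ t φ = ⟨φ, [iH, −ln(λ)A_t] φ⟩`, and the commutator identity as forms on `ran P`
    (Φ : ℝ → ℋ → ℝ)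
    (hident : ∀ t > (0:ℝ), ∀ φ : ℋ,
      Φ t (P φ) = 2 * Real.log lam * (⟪P φ, (c t) (HP (P φ))⟫_ℂ).re
        - Real.log lam *
          (⟪(HP + Complex.I • P) (P φ),
            ((R.comp (c t) - (c t).comp R)) ((HP - Complex.I • P) (P φ))⟫_ℂ).re) :
    ∃ t > (0:ℝ), ∃ a > (0:ℝ), ∀ φ : ℋ, a * ‖P φ‖ ^ 2 ≤ Φ t (P φ) := by
  set L := Real.log lam with hLdef
  have hm0 : 0 < sInf I := hIpos (hIcomp.sInf_mem hIne)
  set m := sInf I with hmdef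
  set K : ℝ := 2*‖HP‖ + 2*(‖HP‖+1)^2 with hK
  have hKnn : 0 ≤ K := by positivity
  have hK0 : 0 < K + 1 := by positivity
  set ε := L * m / (K + 1) with hεdef
  have hε0 : 0 < ε := by positivity
  have h := (Metric.tendsto_nhds.mp hcconv ε hε0)
  rw [eventually_atTop] at h
  obtain ⟨N, hN⟩ := h
  refine ⟨max N 1, lt_of_lt_of_le one_pos (le_max_right _ _), L^2 * m, by positivity, ?_⟩
  set t := max N 1 with htdef
  have hd : ‖c t - (L:ℂ) • (1 : ℋ →L[ℂ] ℋ)‖ ≤ ε := by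
    have := hN t (le_max_left _ _)
    rw [Real.dist_eq] at this
    calc ‖c t - (L:ℂ) • (1 : ℋ →L[ℂ] ℋ)‖
        ≤ |‖c t - (L:ℂ) • (1 : ℋ →L[ℂ] ℋ)‖ - 0| := by
          rw [sub_zero]; exact le_abs_self _
      _ ≤ ε := this.le
  intro φ
  set d := c t - (L:ℂ) • (1 : ℋ →L[ℂ] ℋ) with hdef
  set ψ := P φ with hψ
  have hPψ : P ψ = ψ := by
    have := congrArg (fun T : ℋ →L[ℂ] ℋ => T φ) hPproj
    simpa [ContinuousLinearMap.mul_apply] using this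
  rw [hident t (lt_of_lt_of_le one_pos (le_max_right _ _)) φ]
  -- Term 1 lower bound
  have hct : ∀ x : ℋ, c t x = d x + (L:ℂ) • x := by
    intro x; simp [hdef]
  have e1 : (⟪ψ, c t (HP ψ)⟫_ℂ).re
      = (⟪ψ, d (HP ψ)⟫_ℂ).re + L * (⟪ψ, HP ψ⟫_ℂ).re := by
    rw [hct (HP ψ), inner_add_right, inner_smul_right]
    simp [Complex.mul_re]
  have hb1 : |(⟪ψ, d (HP ψ)⟫_ℂ).re| ≤ ε * ‖HP‖ * ‖ψ‖^2 := by
    have h1 : |(⟪ψ, d (HP ψ)⟫_ℂ).re| ≤ ‖⟪ψ, d (HP ψ)⟫_ℂ‖ := Complex.abs_re_le_norm _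
    have h2 : ‖⟪ψ, d (HP ψ)⟫_ℂ‖ ≤ ‖ψ‖ * ‖d (HP ψ)‖ := norm_inner_le_norm _ _
    have h3 : ‖d (HP ψ)‖ ≤ ε * (‖HP‖ * ‖ψ‖) := by
      calc ‖d (HP ψ)‖ ≤ ‖d‖ * ‖HP ψ‖ := d.le_opNorm _
        _ ≤ ε * (‖HP‖ * ‖ψ‖) := by
            apply mul_le_mul hd (HP.le_opNorm _) (norm_nonneg _) hε0.le
    nlinarith [norm_nonneg ψ, norm_nonneg (d (HP ψ))]
  have hlow : m * ‖ψ‖^2 ≤ (⟪ψ, HP ψ⟫_ℂ).re := hHlow φ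
  have hA : L*m*‖ψ‖^2 - ε*‖HP‖*‖ψ‖^2 ≤ (⟪ψ, c t (HP ψ)⟫_ℂ).re := by
    rw [e1]
    have := mul_le_mul_of_nonneg_left hlow hlam.le
    nlinarith [abs_le.mp hb1]
  -- Term 2 bound
  have hT : R.comp (c t) - (c t).comp R = R.comp d - d.comp R := by
    ext x
    simp [hdef, ContinuousLinearMap.comp_apply, map_sub, map_smul]
  have hTnorm : ‖R.comp (c t) - (c t).comp R‖ ≤ 2 * ε := by
    rw [hT]
    calc ‖R.comp d - d.comp R‖ ≤ ‖R.comp d‖ + ‖d.comp R‖ := norm_sub_le _ _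
      _ ≤ ‖R‖ * ‖d‖ + ‖d‖ * ‖R‖ := by
          gcongr <;> [exact ContinuousLinearMap.opNorm_comp_le _ _;
            exact ContinuousLinearMap.opNorm_comp_le _ _]
      _ ≤ 1 * ε + ε * 1 := by
          gcongr <;> first | exact hRnorm | exact hd | exact norm_nonneg _ | positivity
      _ = 2 * ε := by ring
  have hu : ‖(HP + Complex.I • P) ψ‖ ≤ (‖HP‖+1)*‖ψ‖ := by
    calc ‖(HP + Complex.I • P) ψ‖ = ‖HP ψ + Complex.I • ψ‖ := by
          simp [ContinuousLinearMap.add_apply, hPψ]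
      _ ≤ ‖HP ψ‖ + ‖Complex.I • ψ‖ := norm_add_le _ _
      _ ≤ ‖HP‖ * ‖ψ‖ + ‖ψ‖ := by
          gcongr
          · exact HP.le_opNorm _
          · rw [norm_smul, Complex.norm_I, one_mul]
      _ = (‖HP‖+1)*‖ψ‖ := by ring
  have hv : ‖(HP - Complex.I • P) ψ‖ ≤ (‖HP‖+1)*‖ψ‖ := by
    calc ‖(HP - Complex.I • P) ψ‖ = ‖HP ψ - Complex.I • ψ‖ := by
          simp [ContinuousLinearMap.sub_apply, hPψ]
      _ ≤ ‖HP ψ‖ + ‖Complex.I • ψ‖ := norm_sub_le _ _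
      _ ≤ ‖HP‖ * ‖ψ‖ + ‖ψ‖ := by
          gcongr
          · exact HP.le_opNorm _
          · rw [norm_smul, Complex.norm_I, one_mul]
      _ = (‖HP‖+1)*‖ψ‖ := by ring
  set B := (⟪(HP + Complex.I • P) ψ,
      ((R.comp (c t) - (c t).comp R)) ((HP - Complex.I • P) ψ)⟫_ℂ).re with hBdef
  have hB : |B| ≤ 2*ε*((‖HP‖+1)^2*‖ψ‖^2) := by
    have h1 : |B| ≤ ‖⟪(HP + Complex.I • P) ψ,
        ((R.comp (c t) - (c t).comp R)) ((HP - Complex.I • P) ψ)⟫_ℂ‖ :=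
      Complex.abs_re_le_norm _
    have h2 := norm_inner_le_norm (𝕜 := ℂ) ((HP + Complex.I • P) ψ)
      (((R.comp (c t) - (c t).comp R)) ((HP - Complex.I • P) ψ))
    have h3 : ‖((R.comp (c t) - (c t).comp R)) ((HP - Complex.I • P) ψ)‖
        ≤ 2*ε*((‖HP‖+1)*‖ψ‖) := by
      calc ‖((R.comp (c t) - (c t).comp R)) ((HP - Complex.I • P) ψ)‖
          ≤ ‖R.comp (c t) - (c t).comp R‖ * ‖(HP - Complex.I • P) ψ‖ :=
            ContinuousLinearMap.le_opNorm _ _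
        _ ≤ 2*ε*((‖HP‖+1)*‖ψ‖) := by
            apply mul_le_mul hTnorm hv (norm_nonneg _) (by positivity)
    have h4 : ‖(HP + Complex.I • P) ψ‖ *
        ‖((R.comp (c t) - (c t).comp R)) ((HP - Complex.I • P) ψ)‖
        ≤ ((‖HP‖+1)*‖ψ‖) * (2*ε*((‖HP‖+1)*‖ψ‖)) :=
      mul_le_mul hu h3 (norm_nonneg _) (by positivity)
    calc |B| ≤ ((‖HP‖+1)*‖ψ‖) * (2*ε*((‖HP‖+1)*‖ψ‖)) := h1.trans (h2.trans h4)
      _ = 2*ε*((‖HP‖+1)^2*‖ψ‖^2) := by ring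
  -- Combine
  have hεK : ε * (K + 1) = L * m := by
    rw [hεdef, div_mul_cancel₀ _ hK0.ne']
  have hεKle : ε * K ≤ L * m := by
    calc ε * K ≤ ε * (K + 1) :=
          mul_le_mul_of_nonneg_left (by linarith) hε0.le
      _ = L * m := hεK
  have hBle := (abs_le.mp hB).2
  have hstep : L * B ≤ L * (2*ε*((‖HP‖+1)^2*‖ψ‖^2)) :=
    mul_le_mul_of_nonneg_left hBle hlam.le
  have hstep1 : 2*L*(L*m*‖ψ‖^2 - ε*‖HP‖*‖ψ‖^2) ≤ 2*L*(⟪ψ, c t (HP ψ)⟫_ℂ).re :=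
    mul_le_mul_of_nonneg_left hA (by positivity)
  have hfin : L * (ε * K * ‖ψ‖^2) ≤ L * (L * m * ‖ψ‖^2) := by
    apply mul_le_mul_of_nonneg_left _ hlam.le
    apply mul_le_mul_of_nonneg_right hεKle (sq_nonneg _)
  rw [hK] at hfin
  linarith [hstep, hstep1, hfin]
end
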